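/- arXiv:2311.02814 — 5 statements merged into one kernel-verified Lean document; each statement's English description precedes it below -/
import Mathlib

section
/- Let X be a convex subset of a real inner product space, let f : X → ℝ be μ-strongly convex (i.e., f(γx₁+(1-γ)x₂) ≤ γf(x₁)+(1-γ)f(x₂) - (μγ(1-γ)/2)‖x₁-x₂‖² for all x₁,x₂ ∈ X, γ ∈ [0,1]) with μ ≥ 0. Fix points x̄_{k-1}, x̃_{k-1}, x_k ∈ X, scalars γ_k ∈ (0,1], α_k > 0, β_k, ε_k, δ_k ≥ 0, and define x̂_k = γ_k x̄_{k-1} + (1-γ_k) x̃_{k-1} and x̄_k = (1/(α_k γ_k + μ(1-γ_k)))[α_k x_k + (μ - α_k)(1-γ_k) x̃_{k-1}]. Suppose x̃_k ∈ X satisfies f(x̃_k) + (β_k/2)‖x̃_k - x̂_k‖² + (α_k/2)‖x̃ - x_k‖² ≤ f(x̃) + ((β_k+ε_k)/2)‖x̃ - x̂_k‖² + δ_k for all x̃ ∈ X. Then for every x ∈ X: f(x̃_k) - f(x) + ((α_k γ_k² + γ_k(1-γ_k)μ)/2)‖x - x̄_k‖² ≤ (1-γ_k)[f(x̃_{k-1})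 - f(x)] + ((β_k+ε_k)γ_k²/2)‖x - x̄_{k-1}‖² + δ_k. -/
open scoped RealInnerProductSpace

private lemma quad_combine {H : Type*} [NormedAddCommGroup H] [InnerProductSpace ℝ H]
    (a b : ℝ) (ha : 0 ≤ a) (hb : 0 ≤ b) (hs : 0 < a + b) (p q : H) :
    (a + b) * ‖(a + b)⁻¹ • (a • p + b • q)‖ ^ 2 ≤ a * ‖p‖ ^ 2 + b * ‖q‖ ^ 2 := by
  have hnorm : ‖(a + b)⁻¹ • (a • p + b • q)‖ ^ 2
      = ((a + b)⁻¹) ^ 2 * ‖a • p + b • q‖ ^ 2 := by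
    rw [norm_smul, mul_pow, Real.norm_eq_abs, sq_abs]
  have hexp : ‖a • p + b • q‖ ^ 2
      = a ^ 2 * ‖p‖ ^ 2 + 2 * (a * b * ⟪p, q⟫) + b ^ 2 * ‖q‖ ^ 2 := by
    rw [norm_add_sq_real, norm_smul, norm_smul, real_inner_smul_left,
      real_inner_smul_right, Real.norm_eq_abs, Real.norm_eq_abs,
      abs_of_nonneg ha, abs_of_nonneg hb]
    ring
  have hip : 2 * ⟪p, q⟫ ≤ ‖p‖ ^ 2 + ‖q‖ ^ 2 := by
    have := sq_nonneg (‖p - q‖)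
    rw [norm_sub_sq_real] at this
    linarith
  rw [hnorm, hexp]
  have key : a ^ 2 * ‖p‖ ^ 2 + 2 * (a * b * ⟪p, q⟫) + b ^ 2 * ‖q‖ ^ 2
      ≤ (a + b) * (a * ‖p‖ ^ 2 + b * ‖q‖ ^ 2) := by
    nlinarith [mul_nonneg ha hb, mul_nonneg (mul_nonneg ha hb) (sq_nonneg ‖p - q‖)]
  calc (a + b) * ((a + b)⁻¹ ^ 2 * (a ^ 2 * ‖p‖ ^ 2 + 2 * (a * b * ⟪p, q⟫) + b ^ 2 * ‖q‖ ^ 2))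
      ≤ (a + b) * ((a + b)⁻¹ ^ 2 * ((a + b) * (a * ‖p‖ ^ 2 + b * ‖q‖ ^ 2))) := by
        apply mul_le_mul_of_nonneg_left _ hs.le
        exact mul_le_mul_of_nonneg_left key (by positivity)
    _ = ((a + b)⁻¹ * (a + b)) * (((a + b)⁻¹ * (a + b)) * (a * ‖p‖ ^ 2 + b * ‖q‖ ^ 2)) := by ring
    _ = a * ‖p‖ ^ 2 + b * ‖q‖ ^ 2 := by rw [inv_mul_cancel₀ hs.ne']; ring

set_option maxHeartbeats 800000 in
/-- One-step recursion of the deterministic catalyst scheme for convex optimization. -/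
theorem catalyst_one_step
    {H : Type*} [NormedAddCommGroup H] [InnerProductSpace ℝ H]
    (X : Set H) (hX : Convex ℝ X) (f : H → ℝ) (μ : ℝ) (hμ : 0 ≤ μ)
    (hsc : ∀ x₁ ∈ X, ∀ x₂ ∈ X, ∀ γ ∈ Set.Icc (0:ℝ) 1,
      f (γ • x₁ + (1 - γ) • x₂) ≤ γ * f x₁ + (1 - γ) * f x₂
        - μ * γ * (1 - γ) / 2 * ‖x₁ - x₂‖ ^ 2)
    (xbarPrev xtPrev xk : H) (hxbarPrev : xbarPrev ∈ X) (hxtPrev : xtPrev ∈ X)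
    (γk αk βk εk δk : ℝ) (hγ : γk ∈ Set.Ioc (0:ℝ) 1) (hα : 0 < αk)
    (hβ : 0 ≤ βk) (hε : 0 ≤ εk) (hδ : 0 ≤ δk)
    (xhat : H) (hxhat : xhat = γk • xbarPrev + (1 - γk) • xtPrev)
    (xbar : H)
    (hxbar : xbar = (αk * γk + μ * (1 - γk))⁻¹ •
      (αk • xk + ((μ - αk) * (1 - γk)) • xtPrev))
    (xtk : H) (hxtk : xtk ∈ X)
    (hinexact : ∀ xt ∈ X,
      f xtk + βk / 2 * ‖xtk - xhat‖ ^ 2 + αk / 2 * ‖xt - xk‖ ^ 2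
        ≤ f xt + (βk + εk) / 2 * ‖xt - xhat‖ ^ 2 + δk) :
    ∀ x ∈ X,
      f xtk - f x + (αk * γk ^ 2 + γk * (1 - γk) * μ) / 2 * ‖x - xbar‖ ^ 2
        ≤ (1 - γk) * (f xtPrev - f x)
          + (βk + εk) * γk ^ 2 / 2 * ‖x - xbarPrev‖ ^ 2 + δk := by
  intro x hx
  obtain ⟨hγ0, hγ1⟩ := hγ
  have hγ1' : 0 ≤ 1 - γk := by linarith
  set xt : H := γk • x + (1 - γk) • xtPrev with hxt
  have hxtX : xt ∈ X := hX hx hxtPrev hγ0.le hγ1' (by ring)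
  have h1 := hinexact xt hxtX
  have h2 := hsc x hx xtPrev hxtPrev γk ⟨hγ0.le, hγ1⟩
  rw [← hxt] at h2
  -- ‖xt - xhat‖² = γk² ‖x - xbarPrev‖²
  have h3 : ‖xt - xhat‖ ^ 2 = γk ^ 2 * ‖x - xbarPrev‖ ^ 2 := by
    have : xt - xhat = γk • (x - xbarPrev) := by
      rw [hxt, hxhat]; module
    rw [this, norm_smul, mul_pow, Real.norm_eq_abs, sq_abs]
  -- the quadratic combination step
  set a : ℝ := αk * γk ^ 2 with ha_def
  set b : ℝ := μ * γk * (1 - γk) with hb_def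
  have ha : 0 ≤ a := by positivity
  have hb : 0 ≤ b := by positivity
  have hs' : 0 < αk * γk + μ * (1 - γk) := by nlinarith
  have hab : 0 < a + b := by nlinarith
  set p : H := x - γk⁻¹ • (xk - (1 - γk) • xtPrev) with hp
  set q : H := x - xtPrev with hq
  have hpn : ‖xt - xk‖ ^ 2 = γk ^ 2 * ‖p‖ ^ 2 := by
    have : xt - xk = γk • p := by
      rw [hxt, hp]
      match_scalars <;> field_simp
    rw [this, norm_smul, mul_pow, Real.norm_eq_abs, sq_abs]
  have hcomb : x - xbar = (a + b)⁻¹ • (a • p + b • q) := by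
    rw [hxbar, hp, hq, ha_def, hb_def]
    match_scalars <;> (field_simp; try ring)
  have h4 : (a + b) * ‖x - xbar‖ ^ 2 ≤ a * ‖p‖ ^ 2 + b * ‖q‖ ^ 2 := by
    rw [hcomb]; exact quad_combine a b ha hb hab p q
  have hb2 : 0 ≤ βk / 2 * ‖xtk - xhat‖ ^ 2 := by positivity
  rw [h3] at h1
  rw [hpn] at h1
  -- now combine: all nonlinear products are shared atoms
  have hgoalcoef : αk * γk ^ 2 + γk * (1 - γk) * μ = a + b := by
    rw [ha_def, hb_def]; ring
  rw [hgoalcoef]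
  nlinarith [h1, h2, h4]
end

section
/- Let a_k > 0, Γ_k > 0 be sequences with Γ_1 = 1 and Γ_k = (1-γ_k)Γ_{k-1} for k ≥ 2, where γ_1 = 1 and γ_k ∈ (0,1) for k ≥ 2. Suppose a sequence of real numbers Δ_k (k ≥ 0) and nonnegative reals D_k satisfy Δ_k + c_k D_k ≤ (1-γ_k)Δ_{k-1} + b_k D_{k-1} + δ_k for all k ≥ 1, with b_k, c_k, δ_k ≥ 0 and the compatibility condition b_k/Γ_k ≤ c_{k-1}/Γ_{k-1} for all k ≥ 2. Then for every K ≥ 1: Δ_K + c_K D_K ≤ Γ_K [b_1 D_0 + Σ_{k=1}^K δ_k/Γ_k]. -/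
/-!
Divide the recursion by `Γ_k`. Since `1 - γ_k = Γ_k / Γ_{k-1}` and the compatibility condition says
`b_k ≤ Γ_k c_{k-1} / Γ_{k-1}`, the normalized potential `Φ_k = (Δ_k + c_k D_k) / Γ_k` satisfies
`Φ_k ≤ Φ_{k-1} + δ_k / Γ_k` for `k ≥ 2`, while `γ_1 = 1` and `Γ_1 = 1` give `Φ_1 ≤ b_1 D_0 + δ_1`.
Telescoping from `1` to `K` and multiplying by `Γ_K` gives the bound.
-/

open Finset

theorem le_add_sum_Icc_of_le_add {α : Type*} [AddCommMonoid α] [PartialOrder α]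
    [IsOrderedAddMonoid α] {u v : ℕ → α} {w : α} {m n : ℕ} (hmn : m ≤ n)
    (hbase : u m ≤ w + v m) (hstep : ∀ k, m ≤ k → k < n → u (k + 1) ≤ u k + v (k + 1)) :
    u n ≤ w + ∑ k ∈ Icc m n, v k := by
  induction n, hmn using Nat.le_induction with
  | base => simpa only [Icc_self, sum_singleton] using hbase
  | succ n hmn ih =>
    calc u (n + 1) ≤ u n + v (n + 1) := hstep n hmn n.lt_succ_self
      _ ≤ (w + ∑ k ∈ Icc m n, v k) + v (n + 1) :=
          add_le_add_left (ih fun k hmk hkn => hstep k hmk (hkn.trans n.lt_succ_self)) _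
      _ = w + ∑ k ∈ Icc m (n + 1), v k := by
          rw [sum_Icc_succ_top (hmn.trans n.le_succ), add_assoc]

theorem div_le_div_add_div_of_le_sub_mul_add {g g' θ x y d b c e : ℝ} (hg : 0 < g) (hg' : 0 < g')
    (hgg' : g' = (1 - θ) * g) (hd : 0 ≤ d) (hbc : b / g' ≤ c / g)
    (hy : y ≤ (1 - θ) * x + b * d + e) :
    y / g' ≤ (x + c * d) / g + e / g' := by
  have hθ : 1 - θ = g' / g := by rw [hgg', mul_div_cancel_right₀ _ hg.ne']
  have hb : b ≤ g' / g * c := by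
    rw [div_le_div_iff₀ hg' hg] at hbc
    rw [div_mul_eq_mul_div, le_div_iff₀ hg]
    linarith
  rw [div_le_iff₀ hg']
  calc y ≤ (1 - θ) * x + b * d + e := hy
    _ ≤ g' / g * x + g' / g * c * d + e := by
        rw [hθ]; gcongr
    _ = ((x + c * d) / g + e / g') * g' := by field_simp

theorem catalyst_telescoping_general
    (γ Γ Δ D b c δ : ℕ → ℝ)
    (hγ1 : γ 1 = 1)
    (hΓpos : ∀ k, 1 ≤ k → 0 < Γ k)
    (hΓ1 : Γ 1 = 1) (hΓ : ∀ k, 2 ≤ k → Γ k = (1 - γ k) * Γ (k - 1))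
    (hD : ∀ k, 0 ≤ D k)
    (hrec : ∀ k, 1 ≤ k →
      Δ k + c k * D k ≤ (1 - γ k) * Δ (k - 1) + b k * D (k - 1) + δ k)
    (hcompat : ∀ k, 2 ≤ k → b k / Γ k ≤ c (k - 1) / Γ (k - 1)) :
    ∀ K, 1 ≤ K →
      Δ K + c K * D K ≤ Γ K * (b 1 * D 0 + ∑ k ∈ Finset.Icc 1 K, δ k / Γ k) := by
  intro K hK
  have hbase : (Δ 1 + c 1 * D 1) / Γ 1 ≤ b 1 * D 0 + δ 1 / Γ 1 := by
    have h₁ := hrec 1 le_rfl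
    rw [hγ1, sub_self, zero_mul, zero_add] at h₁
    rwa [hΓ1, div_one, div_one]
  have hstep (k : ℕ) (hk : 1 ≤ k) :
      (Δ (k + 1) + c (k + 1) * D (k + 1)) / Γ (k + 1)
        ≤ (Δ k + c k * D k) / Γ k + δ (k + 1) / Γ (k + 1) :=
    div_le_div_add_div_of_le_sub_mul_add (hΓpos k hk) (hΓpos (k + 1) (by omega))
      (hΓ (k + 1) (by omega)) (hD k) (hcompat (k + 1) (by omega)) (hrec (k + 1) (by omega))
  have hΦ := le_add_sum_Icc_of_le_add (u := fun k => (Δ k + c k * D k) / Γ k)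
    (v := fun k => δ k / Γ k) hK hbase fun k hk _ => hstep k hk
  exact (div_le_iff₀' (hΓpos K hK)).1 hΦ

/-- Abstract telescoping argument behind the global convergence of the catalyst
scheme (Proposition 2.2). -/
theorem catalyst_telescoping
    (γ Γ Δ D b c δ : ℕ → ℝ)
    (hγ1 : γ 1 = 1) (hγ : ∀ k, 2 ≤ k → γ k ∈ Set.Ioo (0:ℝ) 1)
    (hΓpos : ∀ k, 1 ≤ k → 0 < Γ k)
    (hΓ1 : Γ 1 = 1) (hΓ : ∀ k, 2 ≤ k → Γ k = (1 - γ k) * Γ (k - 1))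
    (hD : ∀ k, 0 ≤ D k) (hb : ∀ k, 0 ≤ b k) (hc : ∀ k, 0 ≤ c k)
    (hδ : ∀ k, 0 ≤ δ k)
    (hrec : ∀ k, 1 ≤ k →
      Δ k + c k * D k ≤ (1 - γ k) * Δ (k - 1) + b k * D (k - 1) + δ k)
    (hcompat : ∀ k, 2 ≤ k → b k / Γ k ≤ c (k - 1) / Γ (k - 1)) :
    ∀ K, 1 ≤ K →
      Δ K + c K * D K ≤ Γ K * (b 1 * D 0 + ∑ k ∈ Finset.Icc 1 K, δ k / Γ k) :=
  catalyst_telescoping_general γ Γ Δ D b c δ hγ1 hΓpos hΓ1 hΓ hD hrec hcompat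
end

section
/- Suppose f : X → ℝ is μ-strongly convex with μ > 0 and minimizer x* ∈ X (so (μ/2)‖x - x*‖² ≤ f(x) - f(x*) for all x ∈ X). Suppose a procedure, started at any point x₀ ∈ X and run for K = 6√(L/μ) iterations, outputs x_K with f(x_K) - f(x*) ≤ (4L/K²)‖x* - x₀‖² + 2Kδ, where δ at epoch e is chosen as δ = (2^{-e-2}/K)(f(x_{(0)}) - f(x*)). Then the restarted scheme x_{(e)} obtained by running the procedure from x_{(e-1)} satisfies f(x_{(e)}) - f(x*) ≤ 2^{-e}(f(x_{(0)}) - f(x*)) for all e ≥ 0. -/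
/-- Restarting catalyst for strongly convex problems (Proposition 2.4):
each epoch halves the optimality gap. -/
theorem restart_catalyst
    {H : Type*} [NormedAddCommGroup H] [InnerProductSpace ℝ H]
    (X : Set H) (f : H → ℝ) (μ L : ℝ) (hμ : 0 < μ) (hL : 0 < L)
    (xstar : H) (hxstar : xstar ∈ X)
    (hqg : ∀ x ∈ X, μ / 2 * ‖x - xstar‖ ^ 2 ≤ f x - f xstar)
    (K : ℝ) (hK : K = 6 * Real.sqrt (L / μ))
    (A : H → ℝ → H)
    (hA : ∀ x₀ ∈ X, ∀ δ : ℝ, 0 ≤ δ →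
      A x₀ δ ∈ X ∧
        f (A x₀ δ) - f xstar ≤ 4 * L / K ^ 2 * ‖xstar - x₀‖ ^ 2 + 2 * K * δ)
    (x : ℕ → H) (hx0 : x 0 ∈ X)
    (hrec : ∀ e : ℕ,
      x (e + 1) = A (x e) ((2 : ℝ) ^ (-(e : ℤ) - 3) / K * (f (x 0) - f xstar))) :
    ∀ e : ℕ, f (x e) - f xstar ≤ (2 : ℝ) ^ (-(e : ℤ)) * (f (x 0) - f xstar) := by
  set G := f (x 0) - f xstar with hGdef
  have hG : 0 ≤ G := le_trans (by positivity) (hqg (x 0) hx0)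
  have hKpos : 0 < K := by rw [hK]; positivity
  have hK2 : K ^ 2 = 36 * (L / μ) := by
    rw [hK, mul_pow, Real.sq_sqrt (by positivity)]; norm_num
  have main : ∀ e : ℕ, x e ∈ X ∧ f (x e) - f xstar ≤ (2 : ℝ) ^ (-(e : ℤ)) * G := by
    intro e
    induction e with
    | zero => exact ⟨hx0, by simp [hGdef]⟩
    | succ e ih =>
      obtain ⟨hmem, hbound⟩ := ih
      set p : ℝ := (2 : ℝ) ^ (-(e : ℤ)) with hpdef
      have hp : 0 < p := by positivity
      have hpow3 : (2 : ℝ) ^ (-(e : ℤ) - 3) = p / 8 := by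
        rw [hpdef, zpow_sub₀ (two_ne_zero)]; norm_num
      have hδ : 0 ≤ (2 : ℝ) ^ (-(e : ℤ) - 3) / K * G := by positivity
      obtain ⟨hmem', hb⟩ := hA (x e) hmem _ hδ
      rw [← hrec e] at hmem' hb
      refine ⟨hmem', ?_⟩
      have hpow1 : (2 : ℝ) ^ (-((e : ℕ) + 1 : ℕ) : ℤ) = p / 2 := by
        rw [hpdef, show (-((e : ℕ) + 1 : ℕ) : ℤ) = -(e : ℤ) - 1 by push_cast; ring,
          zpow_sub₀ (two_ne_zero)]
        norm_num
      have hq := hqg (x e) hmem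
      have hN : ‖xstar - x e‖ ^ 2 ≤ 2 / μ * (p * G) := by
        rw [norm_sub_rev]
        have h1 : ‖x e - xstar‖ ^ 2 ≤ 2 / μ * (f (x e) - f xstar) := by
          rw [div_mul_eq_mul_div, le_div_iff₀ hμ]; nlinarith [hq]
        calc ‖x e - xstar‖ ^ 2 ≤ 2 / μ * (f (x e) - f xstar) := h1
          _ ≤ 2 / μ * (p * G) := by
              apply mul_le_mul_of_nonneg_left hbound (by positivity)
      have step1 : 4 * L / K ^ 2 * ‖xstar - x e‖ ^ 2 ≤ 2 / 9 * (p * G) := by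
        have h49 : 4 * L / K ^ 2 = μ / 9 := by
          rw [hK2]; field_simp; ring
        rw [h49]
        calc μ / 9 * ‖xstar - x e‖ ^ 2 ≤ μ / 9 * (2 / μ * (p * G)) := by
              apply mul_le_mul_of_nonneg_left hN (by positivity)
          _ = 2 / 9 * (p * G) := by field_simp
      have step2 : 2 * K * ((2 : ℝ) ^ (-(e : ℤ) - 3) / K * G) = p / 4 * G := by
        rw [hpow3]; field_simp; ring
      rw [hpow1]
      have hpG : 0 ≤ p * G := by positivity
      nlinarith [hb, step1, step2]
  intro e
  exact (main e).2
end

section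
/- Let Z = X × Y ⊆ H be a closed convex subset of a real inner product space, G : Z → H an L-Lipschitz monotone map arising as G(z) = (∇_x F(z), -∇_y F(z)) for F convex-concave and μ-strongly-convex-strongly-concave (μ > 0). Given z_t ∈ Z and stepsize η_t with Lη_t ≤ 1, define ẑ_t = argmin_{z∈Z} η_t⟨G(z_t), z⟩ + (1/2)‖z - z_t‖² and z_{t+1} = argmin_{z∈Z} η_t[⟨G(ẑ_t), z⟩ + (μ/2)‖z - ẑ_t‖²] + (1/2)‖z - z_t‖². Then for all z = (x,y) ∈ Z: η_t[F(x̂_t, y) - F(x, ŷ_t)] + ((μη_t + 1)/2)‖z - z_{t+1}‖² ≤ (1/2)‖z - z_t‖². -/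
open scoped RealInnerProductSpace

lemma quad_three_point {E : Type*} [NormedAddCommGroup E] [InnerProductSpace ℝ E]
    (X : Set E) (hXc : Convex ℝ X) (a u w : E) (s : ℝ) (hs : 0 ≤ s)
    (xm : E) (hxm : xm ∈ X)
    (hmin : ∀ x ∈ X, ⟪a, xm⟫ + s / 2 * ‖xm - u‖ ^ 2 + 1 / 2 * ‖xm - w‖ ^ 2
      ≤ ⟪a, x⟫ + s / 2 * ‖x - u‖ ^ 2 + 1 / 2 * ‖x - w‖ ^ 2) :
    ∀ x ∈ X, ⟪a, xm⟫ + s / 2 * ‖xm - u‖ ^ 2 + 1 / 2 * ‖xm - w‖ ^ 2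
      + (s + 1) / 2 * ‖x - xm‖ ^ 2
      ≤ ⟪a, x⟫ + s / 2 * ‖x - u‖ ^ 2 + 1 / 2 * ‖x - w‖ ^ 2 := by
  intro x hx
  set D : ℝ := ‖x - xm‖ ^ 2 with hD
  have hD0 : 0 ≤ D := by positivity
  refine le_of_forall_pos_le_add ?_
  intro ε hε
  have hcD1 : (0:ℝ) < (s + 1) / 2 * D + 1 := by positivity
  set α : ℝ := min 1 (ε / ((s + 1) / 2 * D + 1)) with hα
  have hα0 : 0 < α := lt_min one_pos (div_pos hε hcD1)
  have hα1 : α ≤ 1 := min_le_left _ _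
  have hxα : xm + α • (x - xm) ∈ X := by
    have := hXc hxm hx (by linarith : (0:ℝ) ≤ 1 - α) (le_of_lt hα0) (by ring)
    convert this using 1
    module
  have key := hmin _ hxα
  have e1 : ∀ v : E, ‖xm + α • (x - xm) - v‖ ^ 2
      = ‖xm - v‖ ^ 2 + 2 * α * ⟪xm - v, x - xm⟫ + α ^ 2 * D := by
    intro v
    have : xm + α • (x - xm) - v = (xm - v) + α • (x - xm) := by abel
    rw [this, norm_add_sq_real, real_inner_smul_right, norm_smul, mul_pow]
    simp [abs_of_pos hα0, hD]
    ring
  have e2 : ∀ v : E, ‖x - v‖ ^ 2 = ‖xm - v‖ ^ 2 + 2 * ⟪xm - v, x - xm⟫ + D := by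
    intro v
    have : x - v = (xm - v) + (x - xm) := by abel
    rw [this, norm_add_sq_real, hD]
  have e3 : ⟪a, xm + α • (x - xm)⟫ = ⟪a, xm⟫ + α * ⟪a, x⟫ - α * ⟪a, xm⟫ := by
    rw [inner_add_right, real_inner_smul_right, inner_sub_right]
    ring
  rw [e1 u, e1 w, e3] at key
  rw [e2 u, e2 w]
  have h2' : 0 ≤ α * ((⟪a, x⟫ - ⟪a, xm⟫ + s * ⟪xm - u, x - xm⟫ + ⟪xm - w, x - xm⟫)
      + α * ((s + 1) / 2 * D)) := by nlinarith [key]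
  have h2 : 0 ≤ (⟪a, x⟫ - ⟪a, xm⟫ + s * ⟪xm - u, x - xm⟫ + ⟪xm - w, x - xm⟫)
      + α * ((s + 1) / 2 * D) := by
    by_contra h
    push_neg at h
    nlinarith [h2', hα0]
  have h3 : α * ((s + 1) / 2 * D) ≤ ε := by
    have h4 : α ≤ ε / ((s + 1) / 2 * D + 1) := min_le_right _ _
    have h5 : α * ((s + 1) / 2 * D) ≤ ε / ((s + 1) / 2 * D + 1) * ((s + 1) / 2 * D) :=
      mul_le_mul_of_nonneg_right h4 (by positivity)
    have h6 : ε / ((s + 1) / 2 * D + 1) * ((s + 1) / 2 * D) ≤ ε := by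
      rw [div_mul_eq_mul_div, div_le_iff₀ hcD1]
      nlinarith
    linarith
  linarith [h2, h3]


lemma cross_term_bound (L η a1 a2 b1 b2 p1 p2 : ℝ)
    (hL : 0 < L) (hη : 0 < η) (hLη : L * η ≤ 1)
    (ha1 : 0 ≤ a1) (ha2 : 0 ≤ a2) (hb1 : 0 ≤ b1) (hb2 : 0 ≤ b2)
    (hl : a1 ^ 2 + a2 ^ 2 ≤ L ^ 2 * (p1 ^ 2 + p2 ^ 2)) :
    η * (a1 * b1 + a2 * b2) ≤ 1 / 2 * (p1 ^ 2 + p2 ^ 2) + 1 / 2 * (b1 ^ 2 + b2 ^ 2) := by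
  have hP0 : (0:ℝ) ≤ p1 ^ 2 + p2 ^ 2 := by positivity
  have hB0 : (0:ℝ) ≤ b1 ^ 2 + b2 ^ 2 := by positivity
  have s1 : (a1 * b1 + a2 * b2) ^ 2 ≤ (a1 ^ 2 + a2 ^ 2) * (b1 ^ 2 + b2 ^ 2) := by
    nlinarith [sq_nonneg (a1 * b2 - a2 * b1)]
  have s2 : (a1 ^ 2 + a2 ^ 2) * (b1 ^ 2 + b2 ^ 2)
      ≤ L ^ 2 * (p1 ^ 2 + p2 ^ 2) * (b1 ^ 2 + b2 ^ 2) :=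
    mul_le_mul_of_nonneg_right hl hB0
  have s3 : (η * (a1 * b1 + a2 * b2)) ^ 2
      ≤ (L * η) ^ 2 * ((p1 ^ 2 + p2 ^ 2) * (b1 ^ 2 + b2 ^ 2)) := by
    have h := mul_le_mul_of_nonneg_left (s1.trans s2) (sq_nonneg η)
    calc (η * (a1 * b1 + a2 * b2)) ^ 2
        = η ^ 2 * (a1 * b1 + a2 * b2) ^ 2 := by ring
      _ ≤ η ^ 2 * (L ^ 2 * (p1 ^ 2 + p2 ^ 2) * (b1 ^ 2 + b2 ^ 2)) := h
      _ = (L * η) ^ 2 * ((p1 ^ 2 + p2 ^ 2) * (b1 ^ 2 + b2 ^ 2)) := by ring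
  have s4 : (L * η) ^ 2 ≤ 1 := by nlinarith [mul_pos hL hη]
  have s5 : (η * (a1 * b1 + a2 * b2)) ^ 2 ≤ (p1 ^ 2 + p2 ^ 2) * (b1 ^ 2 + b2 ^ 2) := by
    nlinarith [s3, s4, mul_nonneg hP0 hB0]
  have hc0 : 0 ≤ η * (a1 * b1 + a2 * b2) := by positivity
  nlinarith [s5, sq_nonneg ((p1 ^ 2 + p2 ^ 2) - (b1 ^ 2 + b2 ^ 2)),
    sq_nonneg (η * (a1 * b1 + a2 * b2) - (1 / 2 * (p1 ^ 2 + p2 ^ 2) + 1 / 2 * (b1 ^ 2 + b2 ^ 2)))]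

set_option maxHeartbeats 2000000 in
/-- One-step contraction of the deterministic regularized extragradient (REG)
method.  The product space `Z = X × Y` is handled componentwise, with
`‖z - z'‖² = ‖x - x'‖² + ‖y - y'‖²` and
`⟨G z, z'⟩ = ⟨∇ₓF z, x'⟩ + ⟨-∇_yF z, y'⟩`. -/
theorem reg_one_step
    {E F : Type*} [NormedAddCommGroup E] [InnerProductSpace ℝ E]
    [NormedAddCommGroup F] [InnerProductSpace ℝ F]
    (X : Set E) (Y : Set F) (hXc : Convex ℝ X) (hYc : Convex ℝ Y)
    (hXcl : IsClosed X) (hYcl : IsClosed Y)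
    (Fn : E → F → ℝ) (Gx : E → F → E) (Gy : E → F → F)
    (μ L η : ℝ) (hμ : 0 < μ) (hL : 0 < L) (hη : 0 < η) (hLη : L * η ≤ 1)
    -- μ-strong convexity in x:
    (hscx : ∀ x₁ ∈ X, ∀ x₂ ∈ X, ∀ y ∈ Y,
      μ / 2 * ‖x₁ - x₂‖ ^ 2 ≤ Fn x₁ y - Fn x₂ y - ⟪Gx x₂ y, x₁ - x₂⟫)
    -- μ-strong concavity in y:
    (hscy : ∀ x ∈ X, ∀ y₁ ∈ Y, ∀ y₂ ∈ Y,
      Fn x y₁ - Fn x y₂ - ⟪Gy x y₂, y₁ - y₂⟫ ≤ -(μ / 2) * ‖y₁ - y₂‖ ^ 2)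
    -- L-Lipschitz operator G = (Gx, -Gy) (squared form of the product norm):
    (hlip : ∀ x ∈ X, ∀ y ∈ Y, ∀ x' ∈ X, ∀ y' ∈ Y,
      ‖Gx x y - Gx x' y'‖ ^ 2 + ‖Gy x y - Gy x' y'‖ ^ 2
        ≤ L ^ 2 * (‖x - x'‖ ^ 2 + ‖y - y'‖ ^ 2))
    (xt : E) (yt : F) (hxt : xt ∈ X) (hyt : yt ∈ Y)
    (xhat : E) (yhat : F) (hxhat : xhat ∈ X) (hyhat : yhat ∈ Y)
    -- ẑ_t minimizes η⟨G(z_t), z⟩ + (1/2)‖z - z_t‖² over Z: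
    (hhatmin : ∀ x ∈ X, ∀ y ∈ Y,
      η * (⟪Gx xt yt, xhat⟫ + ⟪-Gy xt yt, yhat⟫)
          + 1 / 2 * (‖xhat - xt‖ ^ 2 + ‖yhat - yt‖ ^ 2)
        ≤ η * (⟪Gx xt yt, x⟫ + ⟪-Gy xt yt, y⟫)
          + 1 / 2 * (‖x - xt‖ ^ 2 + ‖y - yt‖ ^ 2))
    (xn : E) (yn : F) (hxn : xn ∈ X) (hyn : yn ∈ Y)
    -- z_{t+1} minimizes η[⟨G(ẑ_t), z⟩ + (μ/2)‖z - ẑ_t‖²] + (1/2)‖z - z_t‖² over Z: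
    (hnmin : ∀ x ∈ X, ∀ y ∈ Y,
      η * (⟪Gx xhat yhat, xn⟫ + ⟪-Gy xhat yhat, yn⟫
            + μ / 2 * (‖xn - xhat‖ ^ 2 + ‖yn - yhat‖ ^ 2))
          + 1 / 2 * (‖xn - xt‖ ^ 2 + ‖yn - yt‖ ^ 2)
        ≤ η * (⟪Gx xhat yhat, x⟫ + ⟪-Gy xhat yhat, y⟫
            + μ / 2 * (‖x - xhat‖ ^ 2 + ‖y - yhat‖ ^ 2))
          + 1 / 2 * (‖x - xt‖ ^ 2 + ‖y - yt‖ ^ 2)) :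
    ∀ x ∈ X, ∀ y ∈ Y,
      η * (Fn xhat y - Fn x yhat)
          + (μ * η + 1) / 2 * (‖x - xn‖ ^ 2 + ‖y - yn‖ ^ 2)
        ≤ 1 / 2 * (‖x - xt‖ ^ 2 + ‖y - yt‖ ^ 2) := by
  intro x hx y hy
  have hημ : 0 ≤ η * μ := by positivity
  -- three-point inequality for ẑ, x-component, evaluated at xn
  have hAx := quad_three_point X hXc (η • Gx xt yt) xt xt 0 le_rfl xhat hxhat
    (by
      intro x' hx'
      have h := hhatmin x' hx' yhat hyhat
      simp only [real_inner_smul_left, inner_neg_left] at h ⊢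
      ring_nf at h ⊢
      linarith) xn hxn
  -- three-point inequality for ẑ, y-component, evaluated at yn
  have hAy := quad_three_point Y hYc (η • (-Gy xt yt)) yt yt 0 le_rfl yhat hyhat
    (by
      intro y' hy'
      have h := hhatmin xhat hxhat y' hy'
      simp only [real_inner_smul_left, inner_neg_left] at h ⊢
      ring_nf at h ⊢
      linarith) yn hyn
  -- three-point inequality for z_{t+1}, x-component, evaluated at x
  have hBx := quad_three_point X hXc (η • Gx xhat yhat) xhat xt (η * μ) hημ xn hxn
    (by
      intro x' hx'
      have h := hnmin x' hx' yn hyn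
      simp only [real_inner_smul_left, inner_neg_left] at h ⊢
      ring_nf at h ⊢
      linarith) x hx
  -- three-point inequality for z_{t+1}, y-component, evaluated at y
  have hBy := quad_three_point Y hYc (η • (-Gy xhat yhat)) yhat yt (η * μ) hημ yn hyn
    (by
      intro y' hy'
      have h := hnmin xn hxn y' hy'
      simp only [real_inner_smul_left, inner_neg_left] at h ⊢
      ring_nf at h ⊢
      linarith) y hy
  -- strong convex-concave gap bound
  have hg1 := hscx x hx xhat hxhat yhat hyhat
  have hg2 := hscy xhat hxhat y hy yhat hyhat
  have hgap0 : Fn xhat y - Fn x yhat + μ / 2 * ‖x - xhat‖ ^ 2 + μ / 2 * ‖y - yhat‖ ^ 2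
      ≤ (⟪Gx xhat yhat, xhat⟫ - ⟪Gx xhat yhat, x⟫)
        + (⟪Gy xhat yhat, y⟫ - ⟪Gy xhat yhat, yhat⟫) := by
    simp only [inner_sub_right] at hg1 hg2
    linarith
  have hgap := mul_le_mul_of_nonneg_left hgap0 hη.le
  -- Lipschitz / Cauchy-Schwarz bound on the cross term
  have hl := hlip xhat hxhat yhat hyhat xt hxt yt hyt
  set a1 : ℝ := ‖Gx xhat yhat - Gx xt yt‖ with ha1
  set a2 : ℝ := ‖Gy xhat yhat - Gy xt yt‖ with ha2
  set b1 : ℝ := ‖xn - xhat‖ with hb1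
  set b2 : ℝ := ‖yn - yhat‖ with hb2
  set p1 : ℝ := ‖xhat - xt‖ with hp1
  set p2 : ℝ := ‖yhat - yt‖ with hp2
  have ha1n : 0 ≤ a1 := norm_nonneg _
  have ha2n : 0 ≤ a2 := norm_nonneg _
  have hb1n : 0 ≤ b1 := norm_nonneg _
  have hb2n : 0 ≤ b2 := norm_nonneg _
  have hp1n : 0 ≤ p1 := norm_nonneg _
  have hp2n : 0 ≤ p2 := norm_nonneg _
  have hkey : η * (a1 * b1 + a2 * b2)
      ≤ 1 / 2 * (p1 ^ 2 + p2 ^ 2) + 1 / 2 * (b1 ^ 2 + b2 ^ 2) :=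
    cross_term_bound L η a1 a2 b1 b2 p1 p2 hL hη hLη ha1n ha2n hb1n hb2n hl
  -- Cauchy-Schwarz on each component
  have hcs1 : -(a1 * b1) ≤ ⟪Gx xhat yhat - Gx xt yt, xn - xhat⟫ := by
    have h1 := abs_real_inner_le_norm (Gx xhat yhat - Gx xt yt) (xn - xhat)
    have h2 := neg_abs_le ⟪Gx xhat yhat - Gx xt yt, xn - xhat⟫
    rw [← ha1, ← hb1] at h1
    linarith
  have hcs2 : ⟪Gy xhat yhat - Gy xt yt, yn - yhat⟫ ≤ a2 * b2 := by
    have h1 := abs_real_inner_le_norm (Gy xhat yhat - Gy xt yt) (yn - yhat)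
    have h2 := le_abs_self ⟪Gy xhat yhat - Gy xt yt, yn - yhat⟫
    rw [← ha2, ← hb2] at h1
    linarith
  have hsum : -(a1 * b1 + a2 * b2)
      ≤ ⟪Gx xhat yhat - Gx xt yt, xn - xhat⟫ - ⟪Gy xhat yhat - Gy xt yt, yn - yhat⟫ := by
    linarith
  have hip0 := mul_le_mul_of_nonneg_left hsum hη.le
  have hip : -(1 / 2 * (p1 ^ 2 + p2 ^ 2) + 1 / 2 * (b1 ^ 2 + b2 ^ 2))
      ≤ η * (⟪Gx xhat yhat - Gx xt yt, xn - xhat⟫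
          - ⟪Gy xhat yhat - Gy xt yt, yn - yhat⟫) := by
    have hh : η * -(a1 * b1 + a2 * b2) = -(η * (a1 * b1 + a2 * b2)) := by ring
    rw [hh] at hip0
    linarith
  -- drop terms
  have hd1 : 0 ≤ η * μ * b1 ^ 2 := by positivity
  have hd2 : 0 ≤ η * μ * b2 ^ 2 := by positivity
  -- assemble everything
  simp only [real_inner_smul_left, inner_neg_left, inner_sub_left, inner_sub_right]
    at hAx hAy hBx hBy hgap hip
  ring_nf at hAx hAy hBx hBy hgap hip hd1 hd2 ⊢
  linarith [hAx, hAy, hBx, hBy, hgap, hip, hd1, hd2]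
end

section
/- Under the setting of the REG method with constant stepsize η_t = 1/L and μ > 0, letting z* be the unique saddle point of F on X × Y, the iterates satisfy ‖z_T - z*‖² ≤ (1 + μ/L)^{-T} ‖z_0 - z*‖² for all T ≥ 1. -/
/-!
Both REG steps minimise, over the convex set `Z = X × Y`, a linear function plus squared
distances, i.e. a strongly convex function, so each minimiser satisfies a quadratic growth
(three-point) inequality. Testing the step to `z_{t+1}` at `z*` and the step to `ẑ_t` at
`z_{t+1}`, strong convexity-concavity together with the saddle property gives
`⟪G ẑ, ẑ - z*⟫ ≥ μ/2 ‖ẑ - z*‖²`, which cancels the regularisation term at `z*`; the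
extrapolation error `η ⟪G ẑ - G z, ẑ - z_{t+1}⟫` is absorbed by Cauchy–Schwarz and `ηL ≤ 1`.
What remains is `(1 + μη) ‖z_{t+1} - z*‖² ≤ ‖z_t - z*‖²`, which is iterated.
-/

open Filter Topology
open scoped RealInnerProductSpace

theorem StrongConvexOn.add_sq_le_of_isMinOn {E : Type*} [NormedAddCommGroup E] [NormedSpace ℝ E]
    {s : Set E} {f : E → ℝ} {m : ℝ} {u x : E} (hf : StrongConvexOn s m f) (hmin : IsMinOn f s u)
    (hu : u ∈ s) (hx : x ∈ s) :
    f u + m / 2 * ‖x - u‖ ^ 2 ≤ f x := by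
  have hsegment : ∀ l ∈ Set.Ioo (0 : ℝ) 1, (1 - l) * (m / 2 * ‖x - u‖ ^ 2) ≤ f x - f u := by
    rintro l ⟨hl₀, hl₁⟩
    have hconv := hf.2 hx hu hl₀.le (sub_nonneg.2 hl₁.le) (add_sub_cancel l 1)
    have hmin' := hmin (hf.1 hx hu hl₀.le (sub_nonneg.2 hl₁.le) (add_sub_cancel l 1))
    simp only [smul_eq_mul, Set.mem_ofPred_eq] at hconv hmin'
    refine le_of_mul_le_mul_left ?_ hl₀
    linarith
  have hlim : Tendsto (fun l : ℝ => (1 - l) * (m / 2 * ‖x - u‖ ^ 2)) (𝓝[>] 0)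
      (𝓝 (m / 2 * ‖x - u‖ ^ 2)) := by
    exact tendsto_nhdsWithin_of_tendsto_nhds (Continuous.tendsto' (by fun_prop) 0 _ (by ring))
  have := le_of_tendsto hlim (eventually_of_mem (Ioo_mem_nhdsGT one_pos) hsegment)
  linarith

section Prox

variable {H : Type*} [NormedAddCommGroup H] [InnerProductSpace ℝ H]

/-- `ẑ_t` minimises this with `κ = 0`, `z_{t+1}` with `κ = μ`. -/
noncomputable def regProxObjective (η κ : ℝ) (g c z w : H) : ℝ :=
  η * (⟪g, w⟫ + κ / 2 * ‖w - c‖ ^ 2) + 1 / 2 * ‖w - z‖ ^ 2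

theorem strongConvexOn_regProxObjective {s : Set H} (hs : Convex ℝ s) (η κ : ℝ) (g c z : H) :
    StrongConvexOn s (η * κ + 1) (regProxObjective η κ g c z) := by
  rw [strongConvexOn_iff_convex]
  have haffine : (fun w => regProxObjective η κ g c z w - (η * κ + 1) / 2 * ‖w‖ ^ 2)
      = fun w => innerₛₗ ℝ (η • g - (η * κ) • c - z) w
          + (η * κ / 2 * ‖c‖ ^ 2 + 1 / 2 * ‖z‖ ^ 2) := by
    ext w
    simp only [regProxObjective, norm_sub_sq_real, innerₛₗ_apply_apply, inner_sub_left,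
      real_inner_smul_left, real_inner_comm c w, real_inner_comm z w]
    ring
  rw [haffine]
  exact ((innerₛₗ ℝ _).convexOn hs).add (convexOn_const _ hs)

theorem reg_step_contraction {Z : Set H} (hZ : Convex ℝ Z) {G : H → H} {η μ L : ℝ}
    (hη : 0 ≤ η) (hμ : 0 ≤ μ) (hηL : η * L ≤ 1)
    (hLip : ∀ u ∈ Z, ∀ v ∈ Z, ‖G u - G v‖ ≤ L * ‖u - v‖)
    {zs : H} (hzs : zs ∈ Z) (hG : ∀ w ∈ Z, μ / 2 * ‖w - zs‖ ^ 2 ≤ ⟪G w, w - zs⟫)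
    {z zh zn : H} (hz : z ∈ Z) (hzh : zh ∈ Z) (hzn : zn ∈ Z)
    (hzh_min : IsMinOn (regProxObjective η 0 (G z) z z) Z zh)
    (hzn_min : IsMinOn (regProxObjective η μ (G zh) zh z) Z zn) :
    (1 + η * μ) * ‖zn - zs‖ ^ 2 ≤ ‖z - zs‖ ^ 2 := by
  have hhat := (strongConvexOn_regProxObjective hZ η 0 (G z) z z).add_sq_le_of_isMinOn
    hzh_min hzh hzn
  have hnext := (strongConvexOn_regProxObjective hZ η μ (G zh) zh z).add_sq_le_of_isMinOn
    hzn_min hzn hzs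
  have hmono := mul_le_mul_of_nonneg_left (hG zh hzh) hη
  have hextra : η * ⟪G zh - G z, zh - zn⟫ ≤ 1 / 2 * ‖zh - z‖ ^ 2 + 1 / 2 * ‖zh - zn‖ ^ 2 := by
    have hstep : η * ‖G zh - G z‖ ≤ ‖zh - z‖ := by
      have := mul_le_mul_of_nonneg_left (hLip zh hzh z hz) hη
      nlinarith [norm_nonneg (zh - z)]
    calc η * ⟪G zh - G z, zh - zn⟫ ≤ η * ‖G zh - G z‖ * ‖zh - zn‖ := by
          rw [mul_assoc]; exact mul_le_mul_of_nonneg_left (real_inner_le_norm _ _) hη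
      _ ≤ ‖zh - z‖ * ‖zh - zn‖ := mul_le_mul_of_nonneg_right hstep (norm_nonneg _)
      _ ≤ 1 / 2 * ‖zh - z‖ ^ 2 + 1 / 2 * ‖zh - zn‖ ^ 2 := by
          nlinarith [sq_nonneg (‖zh - z‖ - ‖zh - zn‖)]
  simp only [regProxObjective, inner_sub_left, inner_sub_right] at hhat hnext hmono hextra
  rw [norm_sub_rev zs zn, norm_sub_rev zs z, norm_sub_rev zs zh] at hnext
  rw [norm_sub_rev zh zn] at hextra
  have hreg : 0 ≤ η * μ * ‖zn - zh‖ ^ 2 := by positivity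
  linear_combination 2 * (hhat + hnext + hmono + hextra) + hreg

end Prox

theorem le_inv_pow_mul_of_forall_mul_succ_le {a : ℕ → ℝ} {c : ℝ} (hc : 0 < c)
    (h : ∀ t, c * a (t + 1) ≤ a t) (T : ℕ) : a T ≤ (c ^ T)⁻¹ * a 0 := by
  suffices hpow : c ^ T * a T ≤ a 0 by
    rwa [← div_eq_inv_mul, le_div_iff₀' (by positivity)]
  induction T with
  | zero => simp
  | succ t ih =>
    calc c ^ (t + 1) * a (t + 1) = c ^ t * (c * a (t + 1)) := by ring
      _ ≤ c ^ t * a t := mul_le_mul_of_nonneg_left (h t) (by positivity)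
      _ ≤ a 0 := ih

theorem convex_ofLp_preimage_prod {E F : Type*} [AddCommGroup E] [Module ℝ E] [AddCommGroup F]
    [Module ℝ F] {X : Set E} {Y : Set F} (hX : Convex ℝ X) (hY : Convex ℝ Y) :
    Convex ℝ (WithLp.ofLp ⁻¹' (X ×ˢ Y) : Set (WithLp 2 (E × F))) :=
  (hX.prod hY).linear_preimage (WithLp.linearEquiv 2 ℝ (E × F)).toLinearMap

section SaddlePoint

variable {E F : Type*} [NormedAddCommGroup E] [NormedAddCommGroup F]

noncomputable def saddleOperator (Gx : E → F → E) (Gy : E → F → F) (w : WithLp 2 (E × F)) :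
    WithLp 2 (E × F) :=
  WithLp.toLp 2 (Gx w.fst w.snd, -Gy w.fst w.snd)

theorem norm_saddleOperator_sub_le {X : Set E} {Y : Set F} {Gx : E → F → E} {Gy : E → F → F}
    {L : ℝ} (hL : 0 ≤ L)
    (hlip : ∀ x ∈ X, ∀ y ∈ Y, ∀ x' ∈ X, ∀ y' ∈ Y,
      ‖Gx x y - Gx x' y'‖ ^ 2 + ‖Gy x y - Gy x' y'‖ ^ 2
        ≤ L ^ 2 * (‖x - x'‖ ^ 2 + ‖y - y'‖ ^ 2))
    {u v : WithLp 2 (E × F)} (hu : u ∈ WithLp.ofLp ⁻¹' (X ×ˢ Y))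
    (hv : v ∈ WithLp.ofLp ⁻¹' (X ×ˢ Y)) :
    ‖saddleOperator Gx Gy u - saddleOperator Gx Gy v‖ ≤ L * ‖u - v‖ := by
  refine le_of_pow_le_pow_left₀ two_ne_zero (by positivity) ?_
  simp only [saddleOperator, mul_pow, WithLp.prod_norm_sq_eq_of_L2, WithLp.sub_fst,
    WithLp.sub_snd, WithLp.toLp_fst, WithLp.toLp_snd, neg_sub_neg]
  rw [norm_sub_rev (Gy _ _)]
  exact hlip u.fst hu.1 u.snd hu.2 v.fst hv.1 v.snd hv.2

variable [InnerProductSpace ℝ E] [InnerProductSpace ℝ F]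

theorem le_inner_saddleOperator_sub {X : Set E} {Y : Set F} {Fn : E → F → ℝ}
    {Gx : E → F → E} {Gy : E → F → F} {μ : ℝ}
    (hscx : ∀ x₁ ∈ X, ∀ x₂ ∈ X, ∀ y ∈ Y,
      μ / 2 * ‖x₁ - x₂‖ ^ 2 ≤ Fn x₁ y - Fn x₂ y - ⟪Gx x₂ y, x₁ - x₂⟫)
    (hscy : ∀ x ∈ X, ∀ y₁ ∈ Y, ∀ y₂ ∈ Y,
      Fn x y₁ - Fn x y₂ - ⟪Gy x y₂, y₁ - y₂⟫ ≤ -(μ / 2) * ‖y₁ - y₂‖ ^ 2)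
    {xs : E} {ys : F} (hxs : xs ∈ X) (hys : ys ∈ Y)
    (hsaddle : ∀ x ∈ X, ∀ y ∈ Y, Fn xs y ≤ Fn xs ys ∧ Fn xs ys ≤ Fn x ys)
    {w : WithLp 2 (E × F)} (hw : w ∈ WithLp.ofLp ⁻¹' (X ×ˢ Y)) :
    μ / 2 * ‖w - WithLp.toLp 2 (xs, ys)‖ ^ 2
      ≤ ⟪saddleOperator Gx Gy w, w - WithLp.toLp 2 (xs, ys)⟫ := by
  obtain ⟨hw₁, hw₂⟩ := hw
  have hconvex := hscx xs hxs w.fst hw₁ w.snd hw₂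
  have hconcave := hscy w.fst hw₁ ys hys w.snd hw₂
  have hgap := hsaddle w.fst hw₁ w.snd hw₂
  simp only [saddleOperator, WithLp.prod_norm_sq_eq_of_L2, WithLp.prod_inner_apply,
    WithLp.sub_fst, WithLp.sub_snd, WithLp.toLp_fst, WithLp.toLp_snd, WithLp.ofLp_fst,
    WithLp.ofLp_snd, inner_neg_left, inner_sub_right] at hconvex hconcave ⊢
  rw [norm_sub_rev xs] at hconvex
  rw [norm_sub_rev ys] at hconcave
  linarith [hgap.1, hgap.2]

theorem isMinOn_regProxObjective_toLp {X : Set E} {Y : Set F} {η κ : ℝ} {a p u x₀ : E}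
    {b q v y₀ : F}
    (hmin : ∀ x' ∈ X, ∀ y' ∈ Y,
      η * (⟪a, x₀⟫ + ⟪b, y₀⟫ + κ / 2 * (‖x₀ - p‖ ^ 2 + ‖y₀ - q‖ ^ 2))
          + 1 / 2 * (‖x₀ - u‖ ^ 2 + ‖y₀ - v‖ ^ 2)
        ≤ η * (⟪a, x'⟫ + ⟪b, y'⟫ + κ / 2 * (‖x' - p‖ ^ 2 + ‖y' - q‖ ^ 2))
          + 1 / 2 * (‖x' - u‖ ^ 2 + ‖y' - v‖ ^ 2)) :
    IsMinOn (regProxObjective η κ (WithLp.toLp 2 (a, b)) (WithLp.toLp 2 (p, q))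
      (WithLp.toLp 2 (u, v))) (WithLp.ofLp ⁻¹' (X ×ˢ Y)) (WithLp.toLp 2 (x₀, y₀)) := by
  rintro w ⟨hw₁, hw₂⟩
  simpa only [Set.mem_ofPred_eq, regProxObjective, WithLp.prod_norm_sq_eq_of_L2,
    WithLp.prod_inner_apply, WithLp.sub_fst, WithLp.sub_snd, WithLp.toLp_fst, WithLp.toLp_snd,
    WithLp.ofLp_fst, WithLp.ofLp_snd, mul_add] using hmin w.fst hw₁ w.snd hw₂

end SaddlePoint

theorem reg_linear_convergence_general
    {E F : Type*} [NormedAddCommGroup E] [InnerProductSpace ℝ E]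
    [NormedAddCommGroup F] [InnerProductSpace ℝ F]
    (X : Set E) (Y : Set F) (hXc : Convex ℝ X) (hYc : Convex ℝ Y)
    (Fn : E → F → ℝ) (Gx : E → F → E) (Gy : E → F → F)
    (μ L : ℝ) (hμ : 0 < μ) (hL : 0 < L)
    -- μ-strong convexity in x:
    (hscx : ∀ x₁ ∈ X, ∀ x₂ ∈ X, ∀ y ∈ Y,
      μ / 2 * ‖x₁ - x₂‖ ^ 2 ≤ Fn x₁ y - Fn x₂ y - ⟪Gx x₂ y, x₁ - x₂⟫)
    -- μ-strong concavity in y: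
    (hscy : ∀ x ∈ X, ∀ y₁ ∈ Y, ∀ y₂ ∈ Y,
      Fn x y₁ - Fn x y₂ - ⟪Gy x y₂, y₁ - y₂⟫ ≤ -(μ / 2) * ‖y₁ - y₂‖ ^ 2)
    -- L-Lipschitz operator G = (Gx, -Gy) (squared form of the product norm):
    (hlip : ∀ x ∈ X, ∀ y ∈ Y, ∀ x' ∈ X, ∀ y' ∈ Y,
      ‖Gx x y - Gx x' y'‖ ^ 2 + ‖Gy x y - Gy x' y'‖ ^ 2
        ≤ L ^ 2 * (‖x - x'‖ ^ 2 + ‖y - y'‖ ^ 2))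
    -- unique saddle point z* = (x*, y*):
    (xstar : E) (ystar : F) (hxs : xstar ∈ X) (hys : ystar ∈ Y)
    (hsaddle : ∀ x ∈ X, ∀ y ∈ Y, Fn xstar y ≤ Fn xstar ystar ∧
      Fn xstar ystar ≤ Fn x ystar)
    -- iterates z_t = (x_t, y_t), ẑ_t = (x̂_t, ŷ_t), stepsize η = 1/L:
    (x : ℕ → E) (y : ℕ → F) (xh : ℕ → E) (yh : ℕ → F)
    (hx : ∀ t, x t ∈ X) (hy : ∀ t, y t ∈ Y)
    (hxh : ∀ t, xh t ∈ X) (hyh : ∀ t, yh t ∈ Y)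
    -- ẑ_t minimizes (1/L)⟨G(z_t), z⟩ + (1/2)‖z - z_t‖² over Z:
    (hhatmin : ∀ t, ∀ x' ∈ X, ∀ y' ∈ Y,
      (1 / L) * (⟪Gx (x t) (y t), xh t⟫ + ⟪-Gy (x t) (y t), yh t⟫)
          + 1 / 2 * (‖xh t - x t‖ ^ 2 + ‖yh t - y t‖ ^ 2)
        ≤ (1 / L) * (⟪Gx (x t) (y t), x'⟫ + ⟪-Gy (x t) (y t), y'⟫)
          + 1 / 2 * (‖x' - x t‖ ^ 2 + ‖y' - y t‖ ^ 2))
    -- z_{t+1} minimizes (1/L)[⟨G(ẑ_t), z⟩ + (μ/2)‖z - ẑ_t‖²] + (1/2)‖z - z_t‖²: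
    (hnmin : ∀ t, ∀ x' ∈ X, ∀ y' ∈ Y,
      (1 / L) * (⟪Gx (xh t) (yh t), x (t + 1)⟫ + ⟪-Gy (xh t) (yh t), y (t + 1)⟫
            + μ / 2 * (‖x (t + 1) - xh t‖ ^ 2 + ‖y (t + 1) - yh t‖ ^ 2))
          + 1 / 2 * (‖x (t + 1) - x t‖ ^ 2 + ‖y (t + 1) - y t‖ ^ 2)
        ≤ (1 / L) * (⟪Gx (xh t) (yh t), x'⟫ + ⟪-Gy (xh t) (yh t), y'⟫
            + μ / 2 * (‖x' - xh t‖ ^ 2 + ‖y' - yh t‖ ^ 2))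
          + 1 / 2 * (‖x' - x t‖ ^ 2 + ‖y' - y t‖ ^ 2)) :
    ∀ T : ℕ, 1 ≤ T →
      ‖x T - xstar‖ ^ 2 + ‖y T - ystar‖ ^ 2
        ≤ ((1 + μ / L) ^ T)⁻¹ * (‖x 0 - xstar‖ ^ 2 + ‖y 0 - ystar‖ ^ 2) := by
  intro T _
  set zs : WithLp 2 (E × F) := WithLp.toLp 2 (xstar, ystar)
  set z : ℕ → WithLp 2 (E × F) := fun t => WithLp.toLp 2 (x t, y t)
  have hstep (t : ℕ) : (1 + μ / L) * ‖z (t + 1) - zs‖ ^ 2 ≤ ‖z t - zs‖ ^ 2 := by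
    have hhat := isMinOn_regProxObjective_toLp (κ := 0) (p := x t) (q := y t)
      fun x' hx' y' hy' => by
        simpa only [zero_div, zero_mul, add_zero] using hhatmin t x' hx' y' hy'
    have hnext := isMinOn_regProxObjective_toLp (hnmin t)
    simpa [div_eq_inv_mul] using reg_step_contraction (convex_ofLp_preimage_prod hXc hYc)
      (by positivity) hμ.le (one_div_mul_cancel hL.ne').le
      (fun u hu v hv => norm_saddleOperator_sub_le hL.le hlip hu hv) (zs := zs) (z := z t)
      (zh := WithLp.toLp 2 (xh t, yh t)) (zn := z (t + 1)) ⟨hxs, hys⟩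
      (fun w hw => le_inner_saddleOperator_sub hscx hscy hxs hys hsaddle hw)
      ⟨hx t, hy t⟩ ⟨hxh t, hyh t⟩ ⟨hx (t + 1), hy (t + 1)⟩ hhat hnext
  simpa [z, zs, WithLp.prod_norm_sq_eq_of_L2] using
    le_inv_pow_mul_of_forall_mul_succ_le (a := fun t => ‖z t - zs‖ ^ 2) (by positivity) hstep T

/-- Linear convergence of the regularized extragradient (REG) method with
constant stepsize `η = 1/L` for a smooth, `μ`-strongly-convex-strongly-concave
saddle point problem.  The product space `Z = X × Y` is handled componentwise,
with `‖z - z'‖² = ‖x - x'‖² + ‖y - y'‖²`. -/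
theorem reg_linear_convergence
    {E F : Type*} [NormedAddCommGroup E] [InnerProductSpace ℝ E]
    [NormedAddCommGroup F] [InnerProductSpace ℝ F]
    (X : Set E) (Y : Set F) (hXc : Convex ℝ X) (hYc : Convex ℝ Y)
    (hXcp : IsCompact X) (hYcp : IsCompact Y)
    (Fn : E → F → ℝ) (Gx : E → F → E) (Gy : E → F → F)
    (μ L : ℝ) (hμ : 0 < μ) (hL : 0 < L)
    -- μ-strong convexity in x:
    (hscx : ∀ x₁ ∈ X, ∀ x₂ ∈ X, ∀ y ∈ Y,
      μ / 2 * ‖x₁ - x₂‖ ^ 2 ≤ Fn x₁ y - Fn x₂ y - ⟪Gx x₂ y, x₁ - x₂⟫)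
    -- μ-strong concavity in y:
    (hscy : ∀ x ∈ X, ∀ y₁ ∈ Y, ∀ y₂ ∈ Y,
      Fn x y₁ - Fn x y₂ - ⟪Gy x y₂, y₁ - y₂⟫ ≤ -(μ / 2) * ‖y₁ - y₂‖ ^ 2)
    -- L-Lipschitz operator G = (Gx, -Gy) (squared form of the product norm):
    (hlip : ∀ x ∈ X, ∀ y ∈ Y, ∀ x' ∈ X, ∀ y' ∈ Y,
      ‖Gx x y - Gx x' y'‖ ^ 2 + ‖Gy x y - Gy x' y'‖ ^ 2
        ≤ L ^ 2 * (‖x - x'‖ ^ 2 + ‖y - y'‖ ^ 2))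
    -- unique saddle point z* = (x*, y*):
    (xstar : E) (ystar : F) (hxs : xstar ∈ X) (hys : ystar ∈ Y)
    (hsaddle : ∀ x ∈ X, ∀ y ∈ Y, Fn xstar y ≤ Fn xstar ystar ∧
      Fn xstar ystar ≤ Fn x ystar)
    -- iterates z_t = (x_t, y_t), ẑ_t = (x̂_t, ŷ_t), stepsize η = 1/L:
    (x : ℕ → E) (y : ℕ → F) (xh : ℕ → E) (yh : ℕ → F)
    (hx : ∀ t, x t ∈ X) (hy : ∀ t, y t ∈ Y)
    (hxh : ∀ t, xh t ∈ X) (hyh : ∀ t, yh t ∈ Y)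
    -- ẑ_t minimizes (1/L)⟨G(z_t), z⟩ + (1/2)‖z - z_t‖² over Z:
    (hhatmin : ∀ t, ∀ x' ∈ X, ∀ y' ∈ Y,
      (1 / L) * (⟪Gx (x t) (y t), xh t⟫ + ⟪-Gy (x t) (y t), yh t⟫)
          + 1 / 2 * (‖xh t - x t‖ ^ 2 + ‖yh t - y t‖ ^ 2)
        ≤ (1 / L) * (⟪Gx (x t) (y t), x'⟫ + ⟪-Gy (x t) (y t), y'⟫)
          + 1 / 2 * (‖x' - x t‖ ^ 2 + ‖y' - y t‖ ^ 2))
    -- z_{t+1} minimizes (1/L)[⟨G(ẑ_t), z⟩ + (μ/2)‖z - ẑ_t‖²] + (1/2)‖z - z_t‖²: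
    (hnmin : ∀ t, ∀ x' ∈ X, ∀ y' ∈ Y,
      (1 / L) * (⟪Gx (xh t) (yh t), x (t + 1)⟫ + ⟪-Gy (xh t) (yh t), y (t + 1)⟫
            + μ / 2 * (‖x (t + 1) - xh t‖ ^ 2 + ‖y (t + 1) - yh t‖ ^ 2))
          + 1 / 2 * (‖x (t + 1) - x t‖ ^ 2 + ‖y (t + 1) - y t‖ ^ 2)
        ≤ (1 / L) * (⟪Gx (xh t) (yh t), x'⟫ + ⟪-Gy (xh t) (yh t), y'⟫
            + μ / 2 * (‖x' - xh t‖ ^ 2 + ‖y' - yh t‖ ^ 2))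
          + 1 / 2 * (‖x' - x t‖ ^ 2 + ‖y' - y t‖ ^ 2)) :
    ∀ T : ℕ, 1 ≤ T →
      ‖x T - xstar‖ ^ 2 + ‖y T - ystar‖ ^ 2
        ≤ ((1 + μ / L) ^ T)⁻¹ * (‖x 0 - xstar‖ ^ 2 + ‖y 0 - ystar‖ ^ 2) :=
  reg_linear_convergence_general X Y hXc hYc Fn Gx Gy μ L hμ hL hscx hscy hlip xstar ystar hxs hys
    hsaddle x y xh yh hx hy hxh hyh hhatmin hnmin
end
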